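/- For every alternating weak k-pebble automaton there exists a nondeterministic weak k-pebble automaton accepting the same data language; hence alternating and nondeterministic weak k-PA recognize the same class of data languages. -/

import Mathlib

/-! Core definitions: weak pebble automata over data words. -/

inductive PAct where
  | stay | right | place | lift
deriving DecidableEq

inductive Tape (Sigma : Type) where
  | leftMarker | rightMarker | letter (σ : Sigma)

/-- The label of position `p` of the padded input `⊲ w ⊳` (positions `1..n` carry
the letters of `w`, position `0` the left-end marker, positions `> n` the right-end marker). -/
def labelAt {Sigma D : Type} (w : List (Sigma × D)) (p : ℕ) : Tape Sigma :=
  if p = 0 then Tape.leftMarker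
  else
    match w[p - 1]? with
    | some x => Tape.letter x.1
    | none => Tape.rightMarker

/-- The data value of position `p` (markers carry no data value). -/
def dataAt {Sigma D : Type} (w : List (Sigma × D)) (p : ℕ) : Option D :=
  if p = 0 then none else (w[p - 1]?).map Prod.snd

/-- A (one-way, alternating) weak `k`-pebble automaton over the alphabet `Sigma`.
Pebbles are numbered from `k` down to `1`; pebble `i` being the head pebble.
A transition `(i, σ, V, q) → (p, act)` is represented by `δ i σ V q p act`. -/
structure WeakPA (Sigma : Type) (k : ℕ) where
  Q : Type
  finQ : Fintype Q
  q0 : Q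
  F : Set Q
  U : Set Q
  δ : ℕ → Tape Sigma → Set ℕ → Q → Q → PAct → Prop

namespace WeakPA

variable {Sigma D : Type} {k : ℕ}

/-- A configuration `(i, q, θ)`: head pebble `i`, current state `q`,
pebble assignment `θ` (meaningful on pebbles `i,…,k`). -/
abbrev Config (A : WeakPA Sigma k) : Type := ℕ × A.Q × (ℕ → ℕ)

/-- The set `V = { l : l > i, l ≤ k, pebble l sees the same data value as pebble i }`. -/
def eqSet (w : List (Sigma × D)) (k i : ℕ) (θ : ℕ → ℕ) : Set ℕ :=
  {l | i < l ∧ l ≤ k ∧ (dataAt w (θ l)).isSome ∧ dataAt w (θ l) = dataAt w (θ i)}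

/-- One step of the weak `k`-PA `A` on the input word `w`. -/
def step (A : WeakPA Sigma k) (w : List (Sigma × D)) :
    A.Config → A.Config → Prop := fun c c' =>
  1 ≤ c.1 ∧ c.1 ≤ k ∧
  (∀ j, j ≠ c.1 → j ≠ c.1 - 1 → c'.2.2 j = c.2.2 j) ∧
  ∃ act : PAct,
    A.δ c.1 (labelAt w (c.2.2 c.1)) (eqSet w k c.1 c.2.2) c.2.1 c'.2.1 act ∧
    match act with
    | PAct.stay =>
        c'.1 = c.1 ∧ c'.2.2 c.1 = c.2.2 c.1 ∧ c'.2.2 (c.1 - 1) = c.2.2 (c.1 - 1)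
    | PAct.right =>
        c'.1 = c.1 ∧ c'.2.2 c.1 = c.2.2 c.1 + 1 ∧ c'.2.2 (c.1 - 1) = c.2.2 (c.1 - 1)
    | PAct.lift =>
        c'.1 = c.1 + 1 ∧ c'.2.2 c.1 = c.2.2 c.1 ∧ c'.2.2 (c.1 - 1) = c.2.2 (c.1 - 1)
    | PAct.place =>
        2 ≤ c.1 ∧ c'.1 = c.1 - 1 ∧ c'.2.2 c.1 = c.2.2 c.1 ∧ c'.2.2 (c.1 - 1) = c.2.2 c.1

/-- The alternating "leads to acceptance" semantics. -/
inductive Leads (A : WeakPA Sigma k) (w : List (Sigma × D)) : A.Config → Prop where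
  | final {c : A.Config} : c.2.1 ∈ A.F → Leads A w c
  | univ {c : A.Config} : c.2.1 ∈ A.U →
      (∀ c', A.step w c c' → Leads A w c') → Leads A w c
  | exist {c c' : A.Config} : c.2.1 ∉ A.F → c.2.1 ∉ A.U →
      A.step w c c' → Leads A w c' → Leads A w c

/-- The initial configuration: pebble `k` on the left-end marker in the initial state. -/
def initConfig (A : WeakPA Sigma k) : A.Config := (k, A.q0, fun _ => 0)

def Accepts (A : WeakPA Sigma k) (w : List (Sigma × D)) : Prop :=
  A.Leads w A.initConfig

/-- The data language of `A` over the data domain `D`. -/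
def Lang (A : WeakPA Sigma k) (D : Type) : Set (List (Sigma × D)) :=
  {w | A.Accepts w}

/-- A weak PA is nondeterministic if it has no universal states. -/
def Nondeterministic (A : WeakPA Sigma k) : Prop := A.U = ∅

/-- A weak PA is deterministic (over data domain `D`) if it is nondeterministic and
exactly one transition applies to each configuration. -/
def Deterministic (A : WeakPA Sigma k) (D : Type) : Prop :=
  A.U = ∅ ∧ ∀ (w : List (Sigma × D)) (c : A.Config),
    1 ≤ c.1 → c.1 ≤ k → ∃! c', A.step w c c'

/-- Top view weak PA: the head pebble `i` may test data equality only with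
pebble `i+1`, i.e. every transition has `V = ∅` or `V = {i+1}`. -/
def TopView (A : WeakPA Sigma k) : Prop :=
  ∀ i t V q q' a, A.δ i t V q q' a → V = ∅ ∨ V = {i + 1}

/-- The states `U` of universal states are required to be disjoint from `F`. -/
def WellFormed (A : WeakPA Sigma k) : Prop := ∀ q ∈ A.U, q ∉ A.F

end WeakPA

instance : Fintype PAct :=
  ⟨{.stay, .right, .place, .lift}, fun a => by cases a <;> simp⟩

/-!
The simulating nondeterministic automaton keeps, for every placed pebble, the set of states of
all branches of an accepting computation tree of `A` that are pending at that pebble. Since the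
pebbles only move right and a new pebble starts at the position of the previous one, all
branches with the same pebbles placed read the same positions, so they can be run in lockstep: a
universal state simply contributes all of its successors. The pending branches of pebble `i` are
sorted into those continuing at the current position, those continuing at the next one, and
those placing pebble `i - 1`. The runs of pebble `i - 1` are simulated one at a time, after
guessing the set of states in which they lift back; these become pending branches of pebble `i`.

Soundness: along an accepting run of the simulator, every pending branch of pebble `j` leads to
acceptance in `A` as soon as the states promised for lifting pebble `j` do. Completeness: by
induction on `n`, adding a branch that accepts within depth `n` preserves acceptance of the
simulator, the promise guessed for a child being the set of states in which its parent accepts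
within depth `n`.
-/

namespace WeakPA

open Set

section Moves

variable {Q : Type}

def succHead (i : ℕ) : PAct → ℕ
  | .stay => i
  | .right => i
  | .place => i - 1
  | .lift => i + 1

def succAssign (i : ℕ) (θ : ℕ → ℕ) : PAct → ℕ → ℕ
  | .stay => θ
  | .right => Function.update θ i (θ i + 1)
  | .place => Function.update θ (i - 1) (θ i)
  | .lift => θ

def succConfig (i : ℕ) (θ : ℕ → ℕ) (m : Q × PAct) : ℕ × Q × (ℕ → ℕ) :=
  (succHead i m.2, m.1, succAssign i θ m.2)

theorem eqOn_succAssign {i : ℕ} {θ θ' : ℕ → ℕ} (h : EqOn θ θ' (Ici i)) (a : PAct) :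
    EqOn (succAssign i θ a) (succAssign i θ' a) (Ici (succHead i a)) := by
  intro x hx
  simp only [mem_Ici] at hx
  cases a <;> simp only [succHead, succAssign, Function.update_apply] at hx ⊢
  · exact h hx
  · split_ifs with hxi
    · rw [h (mem_Ici.2 le_rfl)]
    · exact h hx
  · split_ifs with hxi
    · exact h (mem_Ici.2 le_rfl)
    · exact h (mem_Ici.2 (by omega))
  · exact h (mem_Ici.2 (by omega))

theorem eqOn_succAssign_self (i : ℕ) (θ : ℕ → ℕ) (a : PAct) :
    EqOn (succAssign i θ a) θ (Ici (i + 1)) := by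
  intro x hx
  simp only [mem_Ici] at hx
  cases a <;> simp only [succAssign, Function.update_apply] <;> split_ifs <;> first | rfl | omega

theorem eqOn_succAssign_of_ne_right {i : ℕ} (hi : 1 ≤ i) (θ : ℕ → ℕ) {a : PAct}
    (ha : a ≠ .right) : EqOn (succAssign i θ a) θ (Ici i) := by
  intro x hx
  simp only [mem_Ici] at hx
  cases a <;> simp only [succAssign, Function.update_apply] <;> split_ifs <;>
    first | rfl | omega | exact absurd rfl ha

end Moves

/-- The pending obligations of one pebble, indexed by the action that turns them into
configurations: `stay` holds states to be run at the current position, `right` states to be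
run at the next position, `place` states in which a run of the next pebble is to be started,
and `lift` the states promised to be acceptable when control returns to the pebble above. -/
abbrev Frame (Q : Type) := PAct → Set Q

namespace Frame

variable {Q : Type}

def adjoin (F : Frame Q) (a : PAct) (X : Set Q) : Frame Q := Function.update F a (F a ∪ X)

def remove (F : Frame Q) (a : PAct) (q : Q) : Frame Q := Function.update F a (F a \ {q})

def pushAll (F : Frame Q) (M : Set (Q × PAct)) : Frame Q := fun a => F a ∪ {q | (q, a) ∈ M}

def advance (F : Frame Q) : Frame Q
  | .stay => F .right
  | .lift => F .lift
  | _ => ∅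

def returning (R : Set Q) : Frame Q := Function.update ⊥ .lift R

def IsIdle (F : Frame Q) : Prop := ∀ a, a ≠ .lift → F a = ∅

theorem adjoin_of_subset {F : Frame Q} {a : PAct} {X : Set Q} (h : X ⊆ F a) :
    F.adjoin a X = F := by
  simp [adjoin, union_eq_left.2 h]

theorem adjoin_adjoin (F : Frame Q) (a : PAct) (X Y : Set Q) :
    (F.adjoin a X).adjoin a Y = F.adjoin a (X ∪ Y) := by
  simp [adjoin, union_assoc]

theorem remove_adjoin {F : Frame Q} {a : PAct} {q : Q} (hq : q ∉ F a) :
    (F.adjoin a {q}).remove a q = F := by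
  simp [adjoin, remove, hq]

theorem advance_adjoin_right (F : Frame Q) (X : Set Q) :
    (F.adjoin .right X).advance = F.advance.adjoin .stay X := by
  funext a; cases a <;> rfl

theorem adjoin_comm {F : Frame Q} {a b : PAct} (h : a ≠ b) (X Y : Set Q) :
    (F.adjoin b Y).adjoin a X = (F.adjoin a X).adjoin b Y := by
  simp [adjoin, Function.update_of_ne h, Function.update_of_ne h.symm, Function.update_comm h]

theorem adjoin_remove_comm {F : Frame Q} {a b : PAct} (h : a ≠ b) (X : Set Q) (q : Q) :
    (F.remove b q).adjoin a X = (F.adjoin a X).remove b q := by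
  simp [adjoin, remove, Function.update_of_ne h, Function.update_of_ne h.symm,
    Function.update_comm h]

theorem pushAll_adjoin (F : Frame Q) (M : Set (Q × PAct)) (a : PAct) (X : Set Q) :
    (F.adjoin a X).pushAll M = (F.pushAll M).adjoin a X := by
  funext b
  by_cases hb : b = a
  · subst hb; simp [adjoin, pushAll, union_right_comm]
  · simp [adjoin, pushAll, hb]

theorem isIdle_bot : (⊥ : Frame Q).IsIdle := fun _ _ => rfl

theorem isIdle_returning (R : Set Q) : (returning R).IsIdle := fun a ha => by
  simp [returning, ha]

theorem IsIdle.advance_eq {F : Frame Q} (h : F.IsIdle) : F.advance = F := by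
  funext a
  cases a <;> simp only [advance, h .stay (by decide), h .right (by decide), h .place (by decide)]

theorem pushAll_eq_adjoin {F : Frame Q} {M : Set (Q × PAct)}
    (hM : ∀ r, (r, PAct.lift) ∈ M → r ∈ F .lift) :
    F.pushAll M = ((F.adjoin .place {q | (q, .place) ∈ M}).adjoin .right
      {q | (q, .right) ∈ M}).adjoin .stay {q | (q, .stay) ∈ M} := by
  funext a
  cases a <;> simp [pushAll, adjoin]
  exact hM

end Frame

/-- The frames of the pebbles `0, …, k`; only `1, …, k` are used. -/
abbrev Stack (Q : Type) (k : ℕ) := Fin (k + 1) → Frame Q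

namespace Stack

variable {Q : Type} {k : ℕ}

def get (K : Stack Q k) (j : ℕ) : Frame Q := if h : j < k + 1 then K ⟨j, h⟩ else ⊥

def set (K : Stack Q k) (j : ℕ) (F : Frame Q) : Stack Q k :=
  fun l => if (l : ℕ) = j then F else K l

def adjoin (K : Stack Q k) (j : ℕ) (a : PAct) (X : Set Q) : Stack Q k :=
  K.set j ((K.get j).adjoin a X)

def EmptyBelow (i : ℕ) (K : Stack Q k) : Prop := ∀ j < i, K.get j = ⊥

variable {K : Stack Q k} {i j : ℕ} {F G : Frame Q}

@[simp] theorem get_bot : (⊥ : Stack Q k).get j = ⊥ := by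
  unfold get; split_ifs <;> rfl

theorem get_set_self (h : j ≤ k) : (K.set j F).get j = F := by
  simp [get, set, Nat.lt_succ_of_le h]

theorem get_set_of_ne (h : i ≠ j) : (K.set j F).get i = K.get i := by
  unfold get set; split_ifs <;> simp_all

@[simp] theorem set_get : K.set j (K.get j) = K := by
  funext l
  unfold set get
  split_ifs with h h'
  · subst h; rfl
  · omega
  · rfl

@[simp] theorem set_set : (K.set j F).set j G = K.set j G := by
  funext l; unfold set; split_ifs <;> rfl

theorem set_comm (h : i ≠ j) : (K.set i F).set j G = (K.set j G).set i F := by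
  funext l; unfold set; split_ifs <;> simp_all

theorem get_adjoin_self (h : j ≤ k) (a : PAct) (X : Set Q) :
    (K.adjoin j a X).get j = (K.get j).adjoin a X :=
  get_set_self h

theorem get_adjoin_of_ne (h : i ≠ j) (a : PAct) (X : Set Q) :
    (K.adjoin j a X).get i = K.get i :=
  get_set_of_ne h

theorem get_adjoin_apply_of_ne (h : j ≤ k) {a b : PAct} (hb : b ≠ a) (X : Set Q) :
    (K.adjoin j a X).get j b = K.get j b := by
  rw [get_adjoin_self h, Frame.adjoin, Function.update_of_ne hb]

theorem adjoin_of_subset {a : PAct} {X : Set Q} (h : X ⊆ K.get j a) : K.adjoin j a X = K := by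
  simp [adjoin, Frame.adjoin_of_subset h]

theorem adjoin_adjoin (h : j ≤ k) (a : PAct) (X Y : Set Q) :
    (K.adjoin j a X).adjoin j a Y = K.adjoin j a (X ∪ Y) := by
  simp [adjoin, get_set_self h, Frame.adjoin_adjoin]

theorem set_eq_self (h : K.get j = F) : K.set j F = K := h ▸ set_get

theorem adjoin_set_self (h : j ≤ k) (a : PAct) (X : Set Q) :
    (K.set j F).adjoin j a X = K.set j (F.adjoin a X) := by
  simp [adjoin, get_set_self h]

theorem adjoin_set_of_ne (h : i ≠ j) (a : PAct) (X : Set Q) :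
    (K.set j F).adjoin i a X = (K.adjoin i a X).set j F := by
  simp [adjoin, get_set_of_ne h, set_comm h.symm]

theorem EmptyBelow.mono (hK : K.EmptyBelow i) (h : j ≤ i) : K.EmptyBelow j :=
  fun l hl => hK l (by omega)

theorem EmptyBelow.set (hK : K.EmptyBelow i) (h : i ≤ j) : (K.set j F).EmptyBelow i :=
  fun l hl => (get_set_of_ne (by omega)).trans (hK l hl)

theorem EmptyBelow.adjoin (hK : K.EmptyBelow i) (a : PAct) (X : Set Q) :
    (K.adjoin i a X).EmptyBelow i :=
  hK.set le_rfl

theorem EmptyBelow.set_bot (hK : K.EmptyBelow i) (h : i ≤ k) :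
    (K.set i ⊥).EmptyBelow (i + 1) := by
  intro l hl
  rcases (Nat.lt_succ_iff.1 hl).eq_or_lt with rfl | hl
  · exact get_set_self h
  · exact (get_set_of_ne hl.ne).trans (hK l hl)

end Stack

open Stack

variable {Sigma D : Type} {k : ℕ}

section Semantics

variable (A : WeakPA Sigma k) (w : List (Sigma × D))

def Valid (i : ℕ) (σ : Tape Sigma) (V : Set ℕ) (q : A.Q) (m : A.Q × PAct) : Prop :=
  1 ≤ i ∧ i ≤ k ∧ A.δ i σ V q m.1 m.2 ∧ (m.2 = .place → 2 ≤ i)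

/-- The sets of moves that can witness acceptance in one step: none in a final state,
all of them in a universal state, a single one in an existential state. -/
def Choice (i : ℕ) (σ : Tape Sigma) (V : Set ℕ) (q : A.Q) (M : Set (A.Q × PAct)) : Prop :=
  q ∈ A.F ∧ M = ∅ ∨ q ∈ A.U ∧ M = {m | A.Valid i σ V q m} ∨
    q ∉ A.F ∧ q ∉ A.U ∧ ∃ m, A.Valid i σ V q m ∧ M = {m}

abbrev ValidAt (c : A.Config) : A.Q × PAct → Prop :=
  A.Valid c.1 (labelAt w (c.2.2 c.1)) (eqSet w k c.1 c.2.2) c.2.1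

abbrev ChoiceAt (c : A.Config) : Set (A.Q × PAct) → Prop :=
  A.Choice c.1 (labelAt w (c.2.2 c.1)) (eqSet w k c.1 c.2.2) c.2.1

variable {A w}

theorem Choice.subset_valid {i : ℕ} {σ : Tape Sigma} {V : Set ℕ} {q : A.Q}
    {M : Set (A.Q × PAct)} (h : A.Choice i σ V q M) : M ⊆ {m | A.Valid i σ V q m} := by
  rcases h with ⟨-, rfl⟩ | ⟨-, rfl⟩ | ⟨-, -, m, hm, rfl⟩
  · exact empty_subset _
  · exact subset_rfl
  · exact singleton_subset_iff.2 hm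

theorem step_iff {c c' : A.Config} :
    A.step w c c' ↔ ∃ m, A.ValidAt w c m ∧ c' = succConfig c.1 c.2.2 m := by
  obtain ⟨i, q, θ⟩ := c
  obtain ⟨i', q', θ'⟩ := c'
  simp only [step, ValidAt, Valid, succConfig, Prod.exists, Prod.mk.injEq]
  constructor
  · rintro ⟨h1, h2, hrest, act, hδ, hm⟩
    refine ⟨q', act, ⟨h1, h2, hδ, ?_⟩, ?_⟩
    · rintro rfl; exact hm.1
    cases act <;>
      simp only [succHead, succAssign, true_and, funext_iff, Function.update_apply] at hm ⊢ <;>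
      grind
  · rintro ⟨q'', act, ⟨h1, h2, hδ, hpl⟩, rfl, rfl, rfl⟩
    refine ⟨h1, h2, fun j hj hj' => ?_, act, hδ, ?_⟩ <;>
      cases act <;> simp only [succHead, succAssign, Function.update_apply] <;> grind

theorem leads_iff_choice {c : A.Config} :
    A.Leads w c ↔
      ∃ M, A.ChoiceAt w c M ∧ ∀ m ∈ M, A.Leads w (succConfig c.1 c.2.2 m) := by
  constructor
  · intro h
    cases h with
    | final hF => exact ⟨∅, Or.inl ⟨hF, rfl⟩, by simp⟩
    | univ hU h =>
      exact ⟨_, Or.inr (Or.inl ⟨hU, rfl⟩), fun m hm => h _ (step_iff.2 ⟨m, hm, rfl⟩)⟩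
    | exist hF hU hstep h =>
      obtain ⟨m, hm, rfl⟩ := step_iff.1 hstep
      exact ⟨{m}, Or.inr (Or.inr ⟨hF, hU, m, hm, rfl⟩), by simpa using h⟩
  · rintro ⟨M, ⟨hF, -⟩ | ⟨hU, rfl⟩ | ⟨hF, hU, m, hm, rfl⟩, h⟩
    · exact Leads.final hF
    · refine Leads.univ hU fun c' hc' => ?_
      obtain ⟨m, hm, rfl⟩ := step_iff.1 hc'
      exact h m hm
    · exact Leads.exist hF hU (step_iff.2 ⟨m, hm, rfl⟩) (h m rfl)

theorem leads_of_valid {c : A.Config} {m : A.Q × PAct} (hU : c.2.1 ∉ A.U)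
    (hm : A.ValidAt w c m) (h : A.Leads w (succConfig c.1 c.2.2 m)) : A.Leads w c := by
  by_cases hF : c.2.1 ∈ A.F
  · exact Leads.final hF
  · exact Leads.exist hF hU (step_iff.2 ⟨m, hm, rfl⟩) h

theorem leads_iff_final_or_universal {i : ℕ} {q : A.Q} {θ : ℕ → ℕ}
    (hi : ¬(1 ≤ i ∧ i ≤ k)) :
    A.Leads w (i, q, θ) ↔ q ∈ A.F ∪ A.U := by
  rw [leads_iff_choice]
  constructor
  · rintro ⟨M, ⟨hF, -⟩ | ⟨hU, -⟩ | ⟨-, -, m, hm, -⟩, -⟩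
    · exact Or.inl hF
    · exact Or.inr hU
    · exact absurd ⟨hm.1, hm.2.1⟩ hi
  · rintro (hF | hU)
    · exact ⟨∅, Or.inl ⟨hF, rfl⟩, by simp⟩
    · exact ⟨_, Or.inr (Or.inl ⟨hU, rfl⟩), fun m hm => absurd ⟨hm.1, hm.2.1⟩ hi⟩

variable (A w) in
def LeadsWithin : ℕ → A.Config → Prop
  | 0, _ => False
  | n + 1, c => ∃ M, A.ChoiceAt w c M ∧ ∀ m ∈ M, LeadsWithin n (succConfig c.1 c.2.2 m)

theorem LeadsWithin.succ : ∀ {n : ℕ} {c : A.Config}, A.LeadsWithin w n c →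
    A.LeadsWithin w (n + 1) c
  | _ + 1, _, ⟨M, hM, h⟩ => ⟨M, hM, fun m hm => (h m hm).succ⟩

theorem LeadsWithin.mono {n N : ℕ} {c : A.Config} (h : A.LeadsWithin w n c) (hn : n ≤ N) :
    A.LeadsWithin w N c := by
  induction hn with
  | refl => exact h
  | step _ ih => exact ih.succ

theorem LeadsWithin.leads : ∀ {n : ℕ} {c : A.Config}, A.LeadsWithin w n c → A.Leads w c
  | _ + 1, _, ⟨M, hM, h⟩ => leads_iff_choice.2 ⟨M, hM, fun m hm => (h m hm).leads⟩

theorem exists_leadsWithin_of_choice {c : A.Config} {M : Set (A.Q × PAct)}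
    (hM : A.ChoiceAt w c M) (h : ∀ m ∈ M, ∃ n, A.LeadsWithin w n (succConfig c.1 c.2.2 m)) :
    ∃ n, A.LeadsWithin w n c := by
  -- finitely many moves, so finitely many depths to bound
  have := A.finQ
  have hev : ∀ᶠ n in Filter.atTop, ∀ m ∈ M, A.LeadsWithin w n (succConfig c.1 c.2.2 m) :=
    (Filter.eventually_all_finite (toFinite M)).2 fun m hm =>
      Filter.eventually_atTop.2 ((h m hm).imp fun _ hn _ => hn.mono)
  obtain ⟨n, hn⟩ := hev.exists
  exact ⟨n + 1, M, hM, hn⟩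

theorem leads_iff_exists_leadsWithin {c : A.Config} :
    A.Leads w c ↔ ∃ n, A.LeadsWithin w n c := by
  refine ⟨fun h => ?_, fun ⟨_, h⟩ => h.leads⟩
  induction h with
  | final hF => exact exists_leadsWithin_of_choice (Or.inl ⟨hF, rfl⟩) (by simp)
  | univ hU _ ih =>
    exact exists_leadsWithin_of_choice (Or.inr (Or.inl ⟨hU, rfl⟩))
      fun m hm => ih _ (step_iff.2 ⟨m, hm, rfl⟩)
  | exist hF hU hstep _ ih =>
    obtain ⟨m, hm, rfl⟩ := step_iff.1 hstep
    exact exists_leadsWithin_of_choice (Or.inr (Or.inr ⟨hF, hU, m, hm, rfl⟩))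
      (by simpa using ih)

theorem eqSet_congr {i : ℕ} {θ θ' : ℕ → ℕ} (h : EqOn θ θ' (Ici i)) :
    eqSet w k i θ = eqSet w k i θ' := by
  ext l
  refine and_congr_right fun hl => ?_
  rw [h (mem_Ici.2 hl.le), h (mem_Ici.2 le_rfl)]

theorem leadsWithin_congr :
    ∀ {n i : ℕ} {q : A.Q} {θ θ' : ℕ → ℕ}, EqOn θ θ' (Ici i) →
    (A.LeadsWithin w n (i, q, θ) ↔ A.LeadsWithin w n (i, q, θ'))
  | 0, _, _, _, _, _ => Iff.rfl
  | n + 1, i, q, θ, θ', h => by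
    simp only [LeadsWithin, ChoiceAt, h (mem_Ici.2 le_rfl), eqSet_congr h]
    exact exists_congr fun M => and_congr_right fun _ => forall₂_congr fun m _ =>
      leadsWithin_congr (eqOn_succAssign h m.2)

theorem leads_congr {i : ℕ} {q : A.Q} {θ θ' : ℕ → ℕ} (h : EqOn θ θ' (Ici i)) :
    A.Leads w (i, q, θ) ↔ A.Leads w (i, q, θ') := by
  simp only [leads_iff_exists_leadsWithin, leadsWithin_congr h]

theorem leads_succConfig_congr {i : ℕ} {θ θ' : ℕ → ℕ} (h : EqOn θ θ' (Ici i))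
    (m : A.Q × PAct) :
    A.Leads w (succConfig i θ m) ↔ A.Leads w (succConfig i θ' m) :=
  leads_congr (eqOn_succAssign h m.2)

theorem leadsWithin_succConfig_congr {n i : ℕ} {θ θ' : ℕ → ℕ} (h : EqOn θ θ' (Ici i))
    (m : A.Q × PAct) :
    A.LeadsWithin w n (succConfig i θ m) ↔ A.LeadsWithin w n (succConfig i θ' m) :=
  leadsWithin_congr (eqOn_succAssign h m.2)

end Semantics

section Simulator

variable (A : WeakPA Sigma k)

/-- The moves of the simulator with head pebble `i`: `stay` discharges one pending state of the
current position by a `Choice` of moves, `right` advances once only states for the next position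
are pending, `place` starts the run of pebble `i - 1` in one pending state and guesses the set
`R` of states in which that run lifts back, and `lift` returns once nothing is pending. -/
def simStep (i : ℕ) (σ : Tape Sigma) (V : Set ℕ) (K K' : Stack A.Q k) : PAct → Prop
  | .stay => ∃ q ∈ K.get i .stay, ∃ M, A.Choice i σ V q M ∧
      (∀ r, (r, PAct.lift) ∈ M → r ∈ K.get i .lift) ∧
      K' = K.set i (((K.get i).remove .stay q).pushAll M)
  | .right => K.get i .stay = ∅ ∧ K.get i .place = ∅ ∧ K' = K.set i (K.get i).advance
  | .place => ∃ q ∈ K.get i .place, ∃ R : Set A.Q,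
      K' = (K.set i (((K.get i).remove .place q).adjoin .stay R)).set (i - 1)
        ((Frame.returning R).adjoin .stay {q})
  | .lift => (K.get i).IsIdle ∧ K' = K.set i ⊥

noncomputable def simulator : WeakPA Sigma k where
  Q := Stack A.Q k
  finQ := have := A.finQ; Fintype.ofFinite _
  -- lifting pebble `k` ends the run, accepting exactly in final and universal states
  q0 := ((⊥ : Stack A.Q k).set k (Frame.returning (A.F ∪ A.U))).adjoin k .stay {A.q0}
  F := {K | ∀ j, (K.get j).IsIdle}
  U := ∅
  δ := A.simStep

variable {A}

theorem simStep_get_of_lt {i j : ℕ} {σ : Tape Sigma} {V : Set ℕ} {K K' : Stack A.Q k}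
    {a : PAct} (hstep : A.simStep i σ V K K' a) (hij : i < j) : K'.get j = K.get j := by
  cases a
  · obtain ⟨q, -, M, -, -, rfl⟩ := hstep; exact get_set_of_ne (by omega)
  · obtain ⟨-, -, rfl⟩ := hstep; exact get_set_of_ne (by omega)
  · obtain ⟨q, -, R, rfl⟩ := hstep
    rw [get_set_of_ne (by omega), get_set_of_ne (by omega)]
  · obtain ⟨-, rfl⟩ := hstep; exact get_set_of_ne (by omega)

theorem simStep_get_lift {i : ℕ} {σ : Tape Sigma} {V : Set ℕ} {K K' : Stack A.Q k}
    {a : PAct} (hstep : A.simStep i σ V K K' a) (ha : a ≠ .lift) (hi : 1 ≤ i) (hik : i ≤ k) :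
    K'.get i .lift = K.get i .lift := by
  cases a
  · obtain ⟨q, -, M, -, hM, rfl⟩ := hstep
    rw [get_set_self hik]
    exact union_eq_left.2 hM
  · obtain ⟨-, -, rfl⟩ := hstep
    rw [get_set_self hik]; rfl
  · obtain ⟨q, -, R, rfl⟩ := hstep
    rw [get_set_of_ne (by omega), get_set_self hik]
    simp [Frame.adjoin, Frame.remove]
  · exact absurd rfl ha

theorem emptyBelow_of_simStep {i : ℕ} {σ : Tape Sigma} {V : Set ℕ} {K K' : Stack A.Q k}
    {a : PAct} (hstep : A.simStep i σ V K K' a) (hik : i ≤ k) (hK : K.EmptyBelow i) :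
    K'.EmptyBelow (succHead i a) := by
  cases a
  · obtain ⟨q, -, M, -, -, rfl⟩ := hstep; exact hK.set le_rfl
  · obtain ⟨-, -, rfl⟩ := hstep; exact hK.set le_rfl
  · obtain ⟨q, -, R, rfl⟩ := hstep
    exact ((hK.set le_rfl).mono (Nat.sub_le i 1)).set le_rfl
  · obtain ⟨-, rfl⟩ := hstep; exact hK.set_bot hik

theorem simStep_adjoin_right {h i : ℕ} {σ : Tape Sigma} {V : Set ℕ} {K K' : Stack A.Q k}
    {a : PAct} (hstep : A.simStep h σ V K K' a) (hhi : h ≤ i) (hi : 1 ≤ i) (hik : i ≤ k)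
    (ha : ¬(h = i ∧ (a = .right ∨ a = .lift))) (X : Set A.Q) :
    A.simStep h σ V (K.adjoin i .right X) (K'.adjoin i .right X) a := by
  rcases hhi.eq_or_lt with rfl | hlt
  · cases a
    · obtain ⟨q, hq, M, hM, hlift, rfl⟩ := hstep
      refine ⟨q, ?_, M, hM, ?_, ?_⟩
      · simpa [get_adjoin_self hik, Frame.adjoin] using hq
      · simpa [get_adjoin_self hik, Frame.adjoin] using hlift
      · rw [adjoin_set_self hik, get_adjoin_self hik, ← Frame.adjoin_remove_comm (by decide),
          Frame.pushAll_adjoin]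
        simp [Stack.adjoin]
    · exact absurd ⟨rfl, Or.inl rfl⟩ ha
    · obtain ⟨q, hq, R, rfl⟩ := hstep
      refine ⟨q, by simpa [get_adjoin_self hik, Frame.adjoin] using hq, R, ?_⟩
      rw [adjoin_set_of_ne (by omega), adjoin_set_self hik, get_adjoin_self hik,
        ← Frame.adjoin_remove_comm (by decide), Frame.adjoin_comm (by decide)]
      simp [Stack.adjoin]
    · exact absurd ⟨rfl, Or.inr rfl⟩ ha
  · have hne : h ≠ i := hlt.ne
    cases a
    · obtain ⟨q, hq, M, hM, hlift, rfl⟩ := hstep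
      exact ⟨q, by rwa [get_adjoin_of_ne hne], M, hM, by rwa [get_adjoin_of_ne hne],
        by rw [adjoin_set_of_ne hne.symm, get_adjoin_of_ne hne]⟩
    · obtain ⟨hs, hp, rfl⟩ := hstep
      exact ⟨by rwa [get_adjoin_of_ne hne], by rwa [get_adjoin_of_ne hne],
        by rw [adjoin_set_of_ne hne.symm, get_adjoin_of_ne hne]⟩
    · obtain ⟨q, hq, R, rfl⟩ := hstep
      refine ⟨q, by rwa [get_adjoin_of_ne hne], R, ?_⟩
      rw [adjoin_set_of_ne (by omega), adjoin_set_of_ne hne.symm, get_adjoin_of_ne hne]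
    · obtain ⟨hidle, rfl⟩ := hstep
      exact ⟨by rwa [get_adjoin_of_ne hne], by rw [adjoin_set_of_ne hne.symm]⟩

theorem simulator_leads_of_simStep {w : List (Sigma × D)} {i : ℕ} {θ : ℕ → ℕ}
    {K K' : Stack A.Q k} {a : PAct} (hi : 1 ≤ i) (hik : i ≤ k)
    (hstep : A.simStep i (labelAt w (θ i)) (eqSet w k i θ) K K' a) (hpl : a = .place → 2 ≤ i)
    (h : A.simulator.Leads w (succConfig i θ (K', a))) : A.simulator.Leads w (i, K, θ) :=
  leads_of_valid (m := (K', a)) (notMem_empty _) ⟨hi, hik, hstep, hpl⟩ h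

end Simulator

section Soundness

variable {A : WeakPA Sigma k} (w : List (Sigma × D))

def FrameHolds (j : ℕ) (θ : ℕ → ℕ) (F : Frame A.Q) : Prop :=
  (∀ r ∈ F .lift, A.Leads w (succConfig j θ (r, .lift))) →
    ∀ a, a ≠ .lift → ∀ q ∈ F a, A.Leads w (succConfig j θ (q, a))

def StackHolds (i : ℕ) (θ : ℕ → ℕ) (K : Stack A.Q k) : Prop :=
  ∀ j, i ≤ j → j ≤ k → FrameHolds w j θ (K.get j)

variable {w} {i : ℕ} {θ : ℕ → ℕ} {K K' : Stack A.Q k}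

theorem frameHolds_congr {j : ℕ} {θ' : ℕ → ℕ} {F : Frame A.Q} (h : EqOn θ θ' (Ici j)) :
    FrameHolds w j θ F ↔ FrameHolds w j θ' F := by
  simp only [FrameHolds, leads_succConfig_congr h]

theorem Frame.IsIdle.frameHolds {j : ℕ} {F : Frame A.Q} (h : F.IsIdle) :
    FrameHolds w j θ F := fun _ a ha q hq => by
  rw [h a ha] at hq; exact absurd hq (notMem_empty q)

theorem frameHolds_of_process (hik : i ≤ k)
    (hstep : A.simStep i (labelAt w (θ i)) (eqSet w k i θ) K K' .stay)
    (h : StackHolds w i θ K') : FrameHolds w i θ (K.get i) := by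
  obtain ⟨q, -, M, hM, hlift, rfl⟩ := hstep
  have h' := h i le_rfl hik
  rw [get_set_self hik] at h'
  intro hret a ha q' hq'
  have hM' := h' fun r hr => hret r (hr.elim id (hlift r))
  by_cases hq : a = .stay ∧ q' = q
  · obtain ⟨rfl, rfl⟩ := hq
    refine leads_iff_choice.2 ⟨M, hM, fun m hm => ?_⟩
    by_cases hm' : m.2 = .lift
    · obtain ⟨r, b⟩ := m
      obtain rfl : b = .lift := hm'
      exact hret r (hlift r hm)
    · exact hM' m.2 hm' m.1 (Or.inr hm)
  · refine hM' a ha q' (Or.inl ?_)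
    by_cases ha' : a = .stay
    · subst ha'
      exact ⟨hq', fun h => hq ⟨rfl, h⟩⟩
    · simpa [Frame.remove, ha'] using hq'

theorem frameHolds_of_advance (hik : i ≤ k)
    (hstep : A.simStep i (labelAt w (θ i)) (eqSet w k i θ) K K' .right)
    (h : StackHolds w i (succAssign i θ .right) K') : FrameHolds w i θ (K.get i) := by
  obtain ⟨hstay, hplace, rfl⟩ := hstep
  have h' := h i le_rfl hik
  rw [get_set_self hik] at h'
  intro hret a ha q hq
  have hret' : ∀ r ∈ (K.get i).advance .lift,
      A.Leads w (succConfig i (succAssign i θ .right) (r, .lift)) := fun r hr =>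
    (leads_congr (eqOn_succAssign_self i θ .right).symm).1 (hret r hr)
  cases a
  · rw [hstay] at hq; exact absurd hq (notMem_empty q)
  · exact h' hret' .stay (by decide) q hq
  · rw [hplace] at hq; exact absurd hq (notMem_empty q)
  · exact absurd rfl ha

theorem frameHolds_of_launch (hi : 1 ≤ i) (hik : i ≤ k)
    (hstep : A.simStep i (labelAt w (θ i)) (eqSet w k i θ) K K' .place)
    (h : StackHolds w (i - 1) (succAssign i θ .place) K') : FrameHolds w i θ (K.get i) := by
  obtain ⟨qc, -, R, rfl⟩ := hstep
  have hθ : EqOn (succAssign i θ .place) θ (Ici i) :=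
    eqOn_succAssign_of_ne_right hi θ (by decide)
  have hchild := h (i - 1) le_rfl (by omega)
  rw [get_set_self (by omega)] at hchild
  have hparent := h i (by omega) hik
  rw [get_set_of_ne (by omega), get_set_self hik, frameHolds_congr hθ] at hparent
  intro hret a ha q hq
  have hparent' := hparent fun r hr => hret r (by simpa [Frame.adjoin, Frame.remove] using hr)
  have hR : ∀ r ∈ R, A.Leads w (i, r, θ) := fun r hr =>
    hparent' .stay (by decide) r (by simp [Frame.adjoin, Frame.remove, hr])
  by_cases hq' : a = .place ∧ q = qc
  · obtain ⟨rfl, rfl⟩ := hq'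
    refine hchild (fun r hr => ?_) .stay (by decide) q (by simp [Frame.adjoin])
    have hr : r ∈ R := by simpa [Frame.adjoin, Frame.returning] using hr
    show A.Leads w (i - 1 + 1, r, succAssign i θ .place)
    rw [Nat.sub_add_cancel hi, leads_congr hθ]
    exact hR r hr
  · refine hparent' a ha q ?_
    cases a <;> simp_all [Frame.adjoin, Frame.remove]

theorem stackHolds_of_simStep (hi : 1 ≤ i) {a : PAct}
    (hstep : A.simStep i (labelAt w (θ i)) (eqSet w k i θ) K K' a)
    (h : StackHolds w (succHead i a) (succAssign i θ a) K') : StackHolds w i θ K := by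
  intro j hij hjk
  rcases hij.eq_or_lt with rfl | hlt
  · cases a
    · exact frameHolds_of_process hjk hstep h
    · exact frameHolds_of_advance hjk hstep h
    · exact frameHolds_of_launch hi hjk hstep h
    · exact hstep.1.frameHolds
  · rw [← simStep_get_of_lt hstep hlt,
      frameHolds_congr ((eqOn_succAssign_self i θ a).symm.mono (Ici_subset_Ici.2 hlt))]
    exact h j (by cases a <;> simp only [succHead] <;> omega) hjk

theorem stackHolds_of_leads {c : A.simulator.Config} (h : A.simulator.Leads w c) :
    StackHolds w c.1 c.2.2 c.2.1 := by
  induction h with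
  | final hF => exact fun j _ _ => (hF j).frameHolds
  | univ hU => exact absurd hU (notMem_empty _)
  | exist _ _ hstep _ ih =>
    obtain ⟨⟨K', a⟩, ⟨h1, -, hδ, -⟩, rfl⟩ := step_iff.1 hstep
    exact stackHolds_of_simStep h1 hδ ih

theorem accepts_of_simulator_accepts (h : A.simulator.Accepts w) : A.Accepts w := by
  have h0 := stackHolds_of_leads h k le_rfl le_rfl
  simp only [simulator, initConfig, get_adjoin_self le_rfl, get_set_self le_rfl] at h0
  refine h0 (fun r hr => (leads_iff_final_or_universal (i := k + 1) (by omega)).2 ?_)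
    .stay (by decide) A.q0 ?_
  · simpa [Frame.adjoin, Frame.returning] using hr
  · simp [Frame.adjoin]

end Soundness

section Completeness

variable {A : WeakPA Sigma k} (w : List (Sigma × D))

variable (A) in
def CanAdjoin (n : ℕ) (a : PAct) : Prop :=
  ∀ ⦃i : ℕ⦄ ⦃q : A.Q⦄ ⦃K : Stack A.Q k⦄ ⦃θ : ℕ → ℕ⦄,
    1 ≤ i → i ≤ k → (a = .place → 2 ≤ i) →
    K.EmptyBelow i → {r | A.LeadsWithin w n (i + 1, r, θ)} ⊆ K.get i .lift →
    A.LeadsWithin w n (succConfig i θ (q, a)) → A.simulator.Leads w (i, K, θ) →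
    A.simulator.Leads w (i, K.adjoin i a {q}, θ)

variable {w} {n i : ℕ} {θ : ℕ → ℕ} {K : Stack A.Q k}

theorem CanAdjoin.adjoin {a : PAct} (hadd : A.CanAdjoin w n a) (ha : a ≠ .lift) (hi : 1 ≤ i)
    (hik : i ≤ k) (hK : K.EmptyBelow i)
    (hret : {r | A.LeadsWithin w n (i + 1, r, θ)} ⊆ K.get i .lift) {X : Set A.Q}
    (hpl : ∀ q ∈ X, a = .place → 2 ≤ i)
    (hX : ∀ q ∈ X, A.LeadsWithin w n (succConfig i θ (q, a)))
    (h : A.simulator.Leads w (i, K, θ)) : A.simulator.Leads w (i, K.adjoin i a X, θ) := by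
  have := A.finQ
  refine Set.Finite.induction_on (motive := fun X _ => (∀ q ∈ X, a = .place → 2 ≤ i) →
    (∀ q ∈ X, A.LeadsWithin w n (succConfig i θ (q, a))) →
      A.simulator.Leads w (i, K.adjoin i a X, θ)) X (toFinite X)
    (fun _ _ => by rwa [adjoin_of_subset (empty_subset _)])
    (fun {q Y} _ _ ih hpl hX => ?_) hpl hX
  rw [insert_eq, union_comm, ← adjoin_adjoin hik]
  refine hadd hi hik (hpl q (mem_insert q Y)) (hK.adjoin a Y) ?_ (hX q (mem_insert q Y))
    (ih (fun q hq => hpl q (mem_insert_of_mem _ hq)) fun q hq => hX q (mem_insert_of_mem _ hq))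
  rwa [get_adjoin_self hik, Frame.adjoin, Function.update_of_ne ha.symm]

theorem canAdjoin_stay_succ (hS : A.CanAdjoin w n .stay) (hN : A.CanAdjoin w n .right)
    (hP : A.CanAdjoin w n .place) : A.CanAdjoin w (n + 1) .stay := by
  intro i q K θ hi hik _ hK hret hq h
  by_cases hqK : q ∈ K.get i .stay
  · rwa [adjoin_of_subset (singleton_subset_iff.2 hqK)]
  obtain ⟨M, hM, hsucc⟩ := hq
  have hlift : ∀ r, (r, PAct.lift) ∈ M → r ∈ K.get i .lift :=
    fun r hr => hret ((hsucc _ hr).mono n.le_succ)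
  have hret' : {r | A.LeadsWithin w n (i + 1, r, θ)} ⊆ K.get i .lift :=
    fun r hr => hret (LeadsWithin.mono hr n.le_succ)
  refine simulator_leads_of_simStep hi hik (K' := K.set i ((K.get i).pushAll M)) (a := .stay)
    ⟨q, by simp [get_adjoin_self hik, Frame.adjoin], M, hM,
      by rwa [get_adjoin_self hik, Frame.adjoin, Function.update_of_ne (by decide)], ?_⟩
    (by simp) ?_
  · simp [Stack.adjoin, get_set_self hik, Frame.remove_adjoin hqK]
  have hsplit : K.set i ((K.get i).pushAll M) =
      ((K.adjoin i .place {q | (q, .place) ∈ M}).adjoin i .right {q | (q, .right) ∈ M}).adjoin i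
        .stay {q | (q, .stay) ∈ M} := by
    simp only [Frame.pushAll_eq_adjoin hlift, Stack.adjoin, get_set_self hik, set_set]
  have hvalid := hM.subset_valid
  have h1 := hP.adjoin (by decide) hi hik hK hret' (X := {q | (q, PAct.place) ∈ M})
    (fun _ hq _ => (hvalid hq).2.2.2 rfl) (fun q hq => hsucc _ hq) h
  have h2 := hN.adjoin (by decide) hi hik (hK.adjoin _ _)
    (by rwa [get_adjoin_apply_of_ne hik (by decide)]) (X := {q | (q, PAct.right) ∈ M})
    (by simp) (fun q hq => hsucc _ hq) h1
  rw [hsplit]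
  exact hS.adjoin (by decide) hi hik ((hK.adjoin _ _).adjoin _ _)
    (by rwa [get_adjoin_apply_of_ne hik (by decide), get_adjoin_apply_of_ne hik (by decide)])
    (by simp) (fun q hq => hsucc _ hq) h2

/-- The child run is started with the promise `R` of all states in which the parent pebble
accepts within depth `n`; these are discharged by the parent after the child returns. -/
theorem canAdjoin_place (hS : A.CanAdjoin w n .stay) : A.CanAdjoin w n .place := by
  intro i q K θ hi hik hi2 hK hret hq h
  have hi2 := hi2 rfl
  by_cases hqK : q ∈ K.get i .place
  · rwa [adjoin_of_subset (singleton_subset_iff.2 hqK)]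
  set R := {r | A.LeadsWithin w n (i, r, θ)}
  have hθ : EqOn (succAssign i θ .place) θ (Ici i) :=
    eqOn_succAssign_of_ne_right hi θ (by decide)
  have hparent : A.simulator.Leads w (i, K.adjoin i .stay R, θ) :=
    hS.adjoin (by decide) hi hik hK hret (by simp) (fun _ hr => hr) h
  have hidle : A.simulator.Leads w
      (i - 1, (K.adjoin i .stay R).set (i - 1) (Frame.returning R), succAssign i θ .place) := by
    refine simulator_leads_of_simStep (by omega) (by omega) (a := .lift)
      ⟨by rw [get_set_self (by omega)]; exact Frame.isIdle_returning R, rfl⟩ (by simp) ?_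
    show A.simulator.Leads w (i - 1 + 1, _, succAssign i θ .place)
    rw [Nat.sub_add_cancel hi, set_set,
      set_eq_self ((get_adjoin_of_ne (by omega) _ _).trans (hK _ (by omega))), leads_congr hθ]
    exact hparent
  have hchild := hS (by omega) (by omega) (by simp) ((hK.adjoin _ _).mono (by omega) |>.set le_rfl)
    (by
      rw [get_set_self (by omega), Nat.sub_add_cancel hi]
      intro r hr
      simpa [Frame.returning, R] using (leadsWithin_congr hθ).1 hr)
    hq hidle
  have hlaunch : A.simStep i (labelAt w (θ i)) (eqSet w k i θ) (K.adjoin i .place {q})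
      (((K.adjoin i .stay R).set (i - 1) (Frame.returning R)).adjoin (i - 1) .stay {q}) .place := by
    refine ⟨q, by simp [get_adjoin_self hik, Frame.adjoin], R, ?_⟩
    rw [adjoin_set_self (by omega), get_adjoin_self hik, Frame.remove_adjoin hqK]
    simp only [Stack.adjoin, set_set]
  exact simulator_leads_of_simStep hi hik hlaunch (fun _ => hi2) hchild

theorem leads_adjoin_right_of_advance (hS : A.CanAdjoin w n .stay) {q : A.Q} (hi : 1 ≤ i)
    (hik : i ≤ k) (hK : K.EmptyBelow i) (hstay : K.get i .stay = ∅)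
    (hplace : K.get i .place = ∅)
    (hret : {r | A.LeadsWithin w n (i + 1, r, θ)} ⊆ K.get i .lift)
    (hq : A.LeadsWithin w n (succConfig i θ (q, .right)))
    (h : A.simulator.Leads w (i, K.set i (K.get i).advance, succAssign i θ .right)) :
    A.simulator.Leads w (i, K.adjoin i .right {q}, θ) := by
  have h' := hS hi hik (by simp) (hK.set le_rfl)
    (by
      rw [get_set_self hik]
      intro r hr
      exact hret ((leadsWithin_congr (eqOn_succAssign_self i θ .right)).1 hr))
    hq h
  have hadvance : A.simStep i (labelAt w (θ i)) (eqSet w k i θ) (K.adjoin i .right {q})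
      ((K.set i (K.get i).advance).adjoin i .stay {q}) .right := by
    refine ⟨by rwa [get_adjoin_apply_of_ne hik (by decide)],
      by rwa [get_adjoin_apply_of_ne hik (by decide)], ?_⟩
    rw [adjoin_set_self hik, get_adjoin_self hik, Frame.advance_adjoin_right]
    simp only [Stack.adjoin, set_set]
  exact simulator_leads_of_simStep hi hik hadvance (by simp) h'

theorem leads_adjoin_right_of_final (hS : A.CanAdjoin w n .stay) {q : A.Q} (hi : 1 ≤ i)
    (hik : i ≤ k) (hq : A.LeadsWithin w n (succConfig i θ (q, .right))) :
    ∀ d h (K : Stack A.Q k), h + d = i → 1 ≤ h → K.EmptyBelow h → K ∈ A.simulator.F →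
      {r | A.LeadsWithin w n (i + 1, r, θ)} ⊆ K.get i .lift →
      A.simulator.Leads w (h, K.adjoin i .right {q}, θ)
  | 0, h, K, hd, _, hK, hF, hret => by
    obtain rfl : h = i := hd
    refine leads_adjoin_right_of_advance hS hi hik hK (hF h _ (by decide)) (hF h _ (by decide))
      hret hq ?_
    rw [(hF h).advance_eq, set_get]
    exact Leads.final hF
  | d + 1, h, K, hd, h1, hK, hF, hret => by
    have hne : i ≠ h := by omega
    have hlift : A.simStep h (labelAt w (θ h)) (eqSet w k h θ) (K.adjoin i .right {q})
        ((K.set h ⊥).adjoin i .right {q}) .lift :=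
      ⟨by rw [get_adjoin_of_ne hne.symm]; exact hF h, adjoin_set_of_ne hne _ _⟩
    refine simulator_leads_of_simStep h1 (by omega) hlift (by simp)
      (leads_adjoin_right_of_final hS hi hik hq d (h + 1) _ (by omega) (by omega)
        (hK.set_bot (by omega)) (fun j => ?_) (by rwa [get_set_of_ne hne]))
    by_cases hj : j = h
    · subst hj
      rw [get_set_self (by omega)]
      exact Frame.isIdle_bot
    · rw [get_set_of_ne hj]; exact hF j

theorem leads_adjoin_right_of_lift (hS : A.CanAdjoin w n .stay) {q : A.Q} (hi : 1 ≤ i)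
    (hik : i ≤ k) (hK : K.EmptyBelow i) (hidle : (K.get i).IsIdle)
    (hret : {r | A.LeadsWithin w n (i + 1, r, θ)} ⊆ K.get i .lift)
    (hq : A.LeadsWithin w n (succConfig i θ (q, .right)))
    (h : A.simulator.Leads w (i + 1, K.set i ⊥, θ)) :
    A.simulator.Leads w (i, K.adjoin i .right {q}, θ) := by
  refine leads_adjoin_right_of_advance hS hi hik hK (hidle _ (by decide)) (hidle _ (by decide))
    hret hq ?_
  rw [hidle.advance_eq, set_get]
  exact simulator_leads_of_simStep hi hik (a := .lift) ⟨hidle, rfl⟩ (by simp)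
    ((leads_congr (eqOn_succAssign_self i θ .right).symm).1 h)

/-- The simulator is followed move by move until pebble `i` itself moves right or lifts;
there the new obligation is moved to the next position, where it can be discharged. -/
theorem leads_adjoin_right (hS : A.CanAdjoin w n .stay) {q : A.Q} (hi : 1 ≤ i) (hik : i ≤ k)
    {h : ℕ} (hc : A.simulator.Leads w (h, K, θ)) (h1 : 1 ≤ h) (h2 : h ≤ i)
    (hK : K.EmptyBelow h)
    (hret : {r | A.LeadsWithin w n (i + 1, r, θ)} ⊆ K.get i .lift)
    (hq : A.LeadsWithin w n (succConfig i θ (q, .right))) :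
    A.simulator.Leads w (h, K.adjoin i .right {q}, θ) := by
  generalize hc' : ((h, K, θ) : A.simulator.Config) = c at hc
  induction hc generalizing h K θ with
  | final hF =>
    cases hc'
    exact leads_adjoin_right_of_final hS hi hik hq _ _ _ (Nat.add_sub_cancel' h2) h1 hK hF hret
  | univ hU => cases hc'; exact absurd hU (notMem_empty _)
  | exist _ _ hstep hl ih =>
    cases hc'
    obtain ⟨⟨K', a⟩, ⟨-, hhk, hδ, hpl⟩, rfl⟩ := step_iff.1 hstep
    by_cases hspecial : h = i ∧ (a = .right ∨ a = .lift)
    · obtain ⟨rfl, rfl | rfl⟩ := hspecial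
      · obtain ⟨hs, hp, rfl⟩ := hδ
        exact leads_adjoin_right_of_advance hS hi hik hK hs hp hret hq hl
      · obtain ⟨hidle, rfl⟩ := hδ
        exact leads_adjoin_right_of_lift hS hi hik hK hidle hret hq hl
    have hθ : EqOn (succAssign h θ a) θ (Ici i) := by
      rcases h2.eq_or_lt with rfl | hlt
      · exact eqOn_succAssign_of_ne_right h1 θ fun ha => hspecial ⟨rfl, Or.inl ha⟩
      · exact (eqOn_succAssign_self h θ a).mono (Ici_subset_Ici.2 hlt)
    have hlift : K'.get i .lift = K.get i .lift := by
      rcases h2.eq_or_lt with rfl | hlt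
      · exact simStep_get_lift hδ (fun ha => hspecial ⟨rfl, Or.inr ha⟩) h1 hhk
      · rw [simStep_get_of_lt hδ hlt]
    have hhead : 1 ≤ succHead h a ∧ succHead h a ≤ i := by
      cases a <;> simp only [succHead]
      · omega
      · omega
      · have := hpl rfl; omega
      · have : h ≠ i := fun e => hspecial ⟨e, Or.inr rfl⟩
        omega
    refine simulator_leads_of_simStep h1 hhk (simStep_adjoin_right hδ h2 hi hik hspecial {q}) hpl
      (ih hhead.1 hhead.2 (emptyBelow_of_simStep hδ hhk hK) ?_
        ((leadsWithin_succConfig_congr hθ.symm _).1 hq) rfl)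
    rw [hlift]
    intro r hr
    exact hret ((leadsWithin_congr (hθ.mono (Ici_subset_Ici.2 (Nat.le_succ i)))).1 hr)

theorem canAdjoin_right (hS : A.CanAdjoin w n .stay) : A.CanAdjoin w n .right :=
  fun _ _ _ _ hi hik _ hK hret hq h => leads_adjoin_right hS hi hik h hi le_rfl hK hret hq

theorem canAdjoin_stay : ∀ n, A.CanAdjoin w n .stay
  | 0 => fun _ _ _ _ _ _ _ _ _ hq _ => hq.elim
  | n + 1 => canAdjoin_stay_succ (canAdjoin_stay n) (canAdjoin_right (canAdjoin_stay n))
      (canAdjoin_place (canAdjoin_stay n))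

theorem simulator_accepts_of_accepts (hk : 1 ≤ k) (h : A.Accepts w) :
    A.simulator.Accepts w := by
  obtain ⟨n, hn⟩ := leads_iff_exists_leadsWithin.1 h
  refine canAdjoin_stay n hk le_rfl (by simp) (fun j hj => ?_) ?_ hn (Leads.final fun j => ?_)
  · rw [get_set_of_ne hj.ne, get_bot]
  · rw [get_set_self le_rfl]
    intro r hr
    simpa [Frame.returning] using (leads_iff_final_or_universal (by omega)).1 hr.leads
  · by_cases hj : j = k
    · subst hj
      rw [get_set_self le_rfl]
      exact Frame.isIdle_returning _
    · rw [get_set_of_ne hj, get_bot]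
      exact Frame.isIdle_bot

end Completeness

section Equivalence

theorem simulator_lang (A : WeakPA Sigma k) (hk : 1 ≤ k) (D : Type) :
    A.simulator.Lang D = A.Lang D :=
  Set.ext fun _ => ⟨accepts_of_simulator_accepts, simulator_accepts_of_accepts hk⟩

theorem lang_eq_of_eq_zero {A B : WeakPA Sigma k} (hk : k = 0)
    (hq0 : B.q0 ∈ B.F ∪ B.U ↔ A.q0 ∈ A.F ∪ A.U) (D : Type) : B.Lang D = A.Lang D :=
  Set.ext fun _ =>
    (leads_iff_final_or_universal (by omega)).trans
      (hq0.trans (leads_iff_final_or_universal (by omega)).symm)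

theorem exists_nondeterministic_lang_eq (A : WeakPA Sigma k) (D : Type) :
    ∃ B : WeakPA Sigma k, B.Nondeterministic ∧ B.Lang D = A.Lang D := by
  rcases Nat.eq_zero_or_pos k with hk | hk
  · exact ⟨{ A with F := A.F ∪ A.U, U := ∅ }, rfl,
      lang_eq_of_eq_zero hk (by simp) D⟩
  · exact ⟨A.simulator, rfl, A.simulator_lang hk D⟩

theorem Nondeterministic.wellFormed {A : WeakPA Sigma k} (h : A.Nondeterministic) :
    A.WellFormed := fun q hq => absurd (h ▸ hq) (Set.notMem_empty q)

end Equivalence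

end WeakPA

theorem alternating_weakPA_eq_nondeterministic_weakPA_general
    (Sigma D : Type) (k : ℕ) (A : WeakPA Sigma k) :
    (∃ B : WeakPA Sigma k, B.Nondeterministic ∧ B.Lang D = A.Lang D) ∧
    {L : Set (List (Sigma × D)) | ∃ A' : WeakPA Sigma k, A'.WellFormed ∧ A'.Lang D = L} =
      {L : Set (List (Sigma × D)) | ∃ B : WeakPA Sigma k, B.Nondeterministic ∧ B.Lang D = L} := by
  refine ⟨A.exists_nondeterministic_lang_eq D, Set.ext fun L => ⟨?_, ?_⟩⟩
  · rintro ⟨A', -, rfl⟩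
    exact A'.exists_nondeterministic_lang_eq D
  · rintro ⟨B, hB, rfl⟩
    exact ⟨B, hB.wellFormed, rfl⟩

/-- For every (alternating) weak `k`-pebble automaton there exists a
nondeterministic weak `k`-pebble automaton accepting the same data language; hence
alternating and nondeterministic weak `k`-PA recognize the same class of data languages. -/
theorem alternating_weakPA_eq_nondeterministic_weakPA
    (Sigma D : Type) (k : ℕ) (A : WeakPA Sigma k) (hA : A.WellFormed) :
    (∃ B : WeakPA Sigma k, B.Nondeterministic ∧ B.Lang D = A.Lang D) ∧
    {L : Set (List (Sigma × D)) | ∃ A' : WeakPA Sigma k, A'.WellFormed ∧ A'.Lang D = L} =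
      {L : Set (List (Sigma × D)) | ∃ B : WeakPA Sigma k, B.Nondeterministic ∧ B.Lang D = L} :=
  alternating_weakPA_eq_nondeterministic_weakPA_general Sigma D k A
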